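/- Interior regularity across a sign-change point, strong form of Theorem 3.3(hh). Let ψ(s) = s/√(1+s²), let c ∈ (a,b), let f : (a,b) × ℝ → ℝ, and let u ∈ W^{1,1}(a,b) be differentiable on (a,b)∖{c} with u' locally absolutely continuous on (a,c) and on (c,b). Suppose there is an absolutely continuous function w on [a,b] with derivative w' ∈ L¹(a,b) such that w(x) = ψ(u'(x)) for every x ∈ (a,b)∖{c} and w'(x) = −f(x, u(x)) for almost every x ∈ (a,b). Assume f(x, u(x)) ≤ 0 for almost every x ∈ (a,c) and f(x, u(x)) ≥ 0 for almost every x ∈ (c,b). Assume further that either (left condition) there exist δ > 0 and ν ∈ L¹(c−δ, c) with f(x, u(x)) ≥ ν(x) for almost every x ∈ (c−δ, c), N(x) := ∫ₓ^c ν(t) dt < 0 for all x ∈ [c−δ, c), and ∫_{c−δ}^c dx/√(−N(x)) = +∞; or (right condition) there exist δ > 0 and μ ∈ L¹(c, c+δ) with f(x, u(x)) ≤ μ(x) for almost every x ∈ (c, c+δ), M(x) := ∫_c^x μ(t) dt > 0 for all x ∈ (c, c+δ], and ∫_c^{c+δ} dx/√(M(x)) = +∞. Then |w(c)| < 1, u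 is continuously differentiable on all of (a,b) with u' locally absolutely continuous on (a,b), and −(u'(x)/√(1+u'(x)²))' = f(x, u(x)) for almost every x ∈ (a,b). -/

import Mathlib

/-!
Since `w' = -f(·, u) ≥ 0` a.e. on `(a, c)`, the flux is nondecreasing there, so
`w c ≥ w x = ψ(u' x) > -1`. If `w c ≥ 1`, then on the side where the decay condition holds
`w ≥ 1 - M`, with `M` the primitive of the bound on `f(·, u)`; inverting `ψ` gives
`M^{-1/2} ≤ 3 |u'| + 2`, so the integrability of `u'` would force that of `M^{-1/2}`.
Hence `|w| < 1` on `(a, b)`. Then `ψ⁻¹ ∘ w` is continuous and, `ψ⁻¹` being Lipschitz on compact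
subsets of `(-1, 1)`, absolutely continuous on compact subintervals; it agrees with `u'` off `c`,
so it is the classical derivative of `u` everywhere.
-/

open Set Filter MeasureTheory Topology intervalIntegral

namespace AbsolutelyContinuousOnInterval

variable {X Y : Type*} [PseudoMetricSpace X] [PseudoMetricSpace Y] {f g : ℝ → X} {a b : ℝ}

theorem congr (hf : AbsolutelyContinuousOnInterval f a b) (hfg : EqOn f g (uIcc a b)) :
    AbsolutelyContinuousOnInterval g a b := by
  refine hf.congr' ?_
  filter_upwards [mem_inf_of_right (mem_principal_self (disjWithin a b))] with E hE
  refine Finset.sum_congr rfl fun i hi => ?_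
  rw [hfg (hE.1 i hi).1, hfg (hE.1 i hi).2]

theorem _root_.LipschitzOnWith.comp_absolutelyContinuousOnInterval {φ : X → Y} {K : NNReal}
    {t : Set X} (hφ : LipschitzOnWith K φ t) (hf : AbsolutelyContinuousOnInterval f a b)
    (hft : MapsTo f (uIcc a b) t) : AbsolutelyContinuousOnInterval (φ ∘ f) a b := by
  have hK : Tendsto (fun E : ℕ × (ℕ → ℝ × ℝ) =>
      K * ∑ i ∈ Finset.range E.1, dist (f (E.2 i).1) (f (E.2 i).2))
      (totalLengthFilter ⊓ 𝓟 (disjWithin a b)) (𝓝 0) := by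
    simpa using Tendsto.const_mul (K : ℝ) hf
  refine squeeze_zero' (Eventually.of_forall fun E => Finset.sum_nonneg fun i _ => dist_nonneg)
    ?_ hK
  filter_upwards [mem_inf_of_right (mem_principal_self (disjWithin a b))] with E hE
  rw [Finset.mul_sum]
  exact Finset.sum_le_sum fun i hi =>
    hφ.dist_le_mul _ (hft (hE.1 i hi).1) _ (hft (hE.1 i hi).2)

end AbsolutelyContinuousOnInterval

theorem AbsolutelyContinuousOnInterval.exists_eq_add_integral {f : ℝ → ℝ} {a b : ℝ}
    (hf : AbsolutelyContinuousOnInterval f a b) (hab : a ≤ b) :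
    ∃ V : ℝ → ℝ, IntegrableOn V (Icc a b) ∧ ∀ x ∈ Icc a b, f x = f a + ∫ t in a..x, V t := by
  refine ⟨deriv f, ?_, fun x hx => ?_⟩
  · exact (intervalIntegrable_iff_integrableOn_Icc_of_le hab).1 hf.intervalIntegrable_deriv
  · rw [(hf.mono (uIcc_subset_uIcc left_mem_uIcc (Icc_subset_uIcc hx))).integral_deriv_eq_sub]
    ring

theorem integral_mono_of_ae_mem_Ioo {f g : ℝ → ℝ} {a b : ℝ} (hab : a ≤ b)
    (hf : IntervalIntegrable f volume a b) (hg : IntervalIntegrable g volume a b)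
    (h : ∀ᵐ x, x ∈ Ioo a b → f x ≤ g x) : ∫ x in a..b, f x ≤ ∫ x in a..b, g x := by
  simp only [integral_of_le hab, integral_Ioc_eq_integral_Ioo]
  exact setIntegral_mono_ae_restrict (hf.1.mono_set Ioo_subset_Ioc_self)
    (hg.1.mono_set Ioo_subset_Ioc_self) ((ae_restrict_iff' measurableSet_Ioo).2 h)

section Primitive

variable {w w' : ℝ → ℝ} {a b : ℝ}

theorem absolutelyContinuousOnInterval_of_eq_add_integral (hab : a ≤ b)
    (hw' : IntervalIntegrable w' volume a b)
    (hw : ∀ x ∈ Icc a b, w x = w a + ∫ t in a..x, w' t) :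
    AbsolutelyContinuousOnInterval w a b := by
  have hconst : AbsolutelyContinuousOnInterval (fun _ => w a) a b :=
    (LipschitzWith.const (w a)).lipschitzOnWith.absolutelyContinuousOnInterval
  refine (hconst.fun_add (hw'.absolutelyContinuousOnInterval_intervalIntegral left_mem_uIcc)).congr
    fun x hx => (hw x ?_).symm
  rwa [uIcc_of_le hab] at hx

theorem sub_eq_integral_of_eq_add_integral (hw' : IntervalIntegrable w' volume a b)
    (hw : ∀ x ∈ Icc a b, w x = w a + ∫ t in a..x, w' t) {p q : ℝ} (hp : p ∈ Icc a b)
    (hq : q ∈ Icc a b) : w q - w p = ∫ t in p..q, w' t := by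
  have hsub : ∀ x ∈ Icc a b, uIcc a x ⊆ uIcc a b := fun x hx =>
    uIcc_subset_uIcc left_mem_uIcc (Icc_subset_uIcc hx)
  rw [hw q hq, hw p hp, add_sub_add_left_eq_sub,
    integral_interval_sub_left (hw'.mono_set (hsub q hq)) (hw'.mono_set (hsub p hp))]

theorem ae_hasDerivAt_of_eq_add_integral (hw' : IntervalIntegrable w' volume a b)
    (hw : ∀ x ∈ Icc a b, w x = w a + ∫ t in a..x, w' t) :
    ∀ᵐ x, x ∈ Ioo a b → HasDerivAt w (w' x) x := by
  filter_upwards [hw'.ae_hasDerivAt_integral] with x hx hxab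
  have hxab' : x ∈ uIcc a b := Icc_subset_uIcc (Ioo_subset_Icc_self hxab)
  exact ((hx hxab' a left_mem_uIcc).const_add (w a)).congr_of_eventuallyEq
    (eventuallyEq_of_mem (Icc_mem_nhds hxab.1 hxab.2) hw)

theorem hasDerivAt_of_eq_add_integral {g : ℝ → ℝ} {x : ℝ}
    (hw' : IntervalIntegrable w' volume a b)
    (hw : ∀ x ∈ Icc a b, w x = w a + ∫ t in a..x, w' t)
    (hw'g : ∀ᵐ t, t ∈ Ioo a b → w' t = g t) (hg : ContinuousAt g x) (hx : x ∈ Ioo a b) :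
    HasDerivAt w (g x) x := by
  have hmeas : StronglyMeasurableAtFilter w' (𝓝 x) :=
    ⟨Ioc a b, Ioc_mem_nhds hx.1 hx.2, hw'.1.aestronglyMeasurable⟩
  have hlim : Tendsto w' (𝓝 x ⊓ ae volume) (𝓝 (g x)) := by
    refine (hg.tendsto.mono_left inf_le_left).congr' ?_
    filter_upwards [mem_inf_of_left (Ioo_mem_nhds hx.1 hx.2), mem_inf_of_right hw'g]
      with t ht h using (h ht).symm
  have hax : uIcc a x ⊆ uIcc a b :=
    uIcc_subset_uIcc left_mem_uIcc (Icc_subset_uIcc (Ioo_subset_Icc_self hx))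
  exact ((integral_hasDerivAt_of_tendsto_ae_right (hw'.mono_set hax) hmeas hlim).const_add
    (w a)).congr_of_eventuallyEq (eventuallyEq_of_mem (Icc_mem_nhds hx.1 hx.2) hw)

end Primitive

noncomputable def psi (s : ℝ) : ℝ := s / √(1 + s ^ 2)

noncomputable def psiInv (t : ℝ) : ℝ := t / √(1 - t ^ 2)

theorem abs_psi_lt_one (s : ℝ) : |psi s| < 1 := by
  have h : 0 < √(1 + s ^ 2) := by positivity
  rw [psi, abs_div, abs_of_pos h, div_lt_one h, ← Real.sqrt_sq_eq_abs]
  exact Real.sqrt_lt_sqrt (sq_nonneg s) (lt_one_add _)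

theorem psiInv_psi (s : ℝ) : psiInv (psi s) = s := by
  have h : 0 < √(1 + s ^ 2) := by positivity
  have h1 : 1 - psi s ^ 2 = (√(1 + s ^ 2))⁻¹ ^ 2 := by
    rw [psi, div_pow, inv_pow, Real.sq_sqrt (by positivity)]
    field_simp
    ring
  rw [psiInv, h1, Real.sqrt_sq (by positivity), psi]
  field_simp

theorem contDiffOn_psiInv : ContDiffOn ℝ 1 psiInv (Ioo (-1) 1) := by
  have h : ∀ t ∈ Ioo (-1 : ℝ) 1, 0 < 1 - t ^ 2 := fun t ht => by
    nlinarith [ht.1, ht.2]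
  refine contDiffOn_id.div ((contDiffOn_const.sub (contDiffOn_id.pow 2)).sqrt ?_) ?_
  · exact fun t ht => (h t ht).ne'
  · exact fun t ht => (Real.sqrt_pos.2 (h t ht)).ne'

theorem AbsolutelyContinuousOnInterval.psiInv_comp {f : ℝ → ℝ} {a b : ℝ}
    (hf : AbsolutelyContinuousOnInterval f a b) (hf1 : ∀ x ∈ uIcc a b, |f x| < 1) :
    AbsolutelyContinuousOnInterval (psiInv ∘ f) a b := by
  obtain ⟨x₀, hx₀, hmax⟩ := isCompact_uIcc.exists_isMaxOn nonempty_uIcc hf.continuousOn.abs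
  have hr := hf1 x₀ hx₀
  obtain ⟨K, hK⟩ := (contDiffOn_psiInv.mono (Icc_subset_Ioo (neg_lt_neg hr) hr))
    |>.exists_lipschitzOnWith one_ne_zero (convex_Icc _ _) isCompact_Icc
  exact hK.comp_absolutelyContinuousOnInterval hf fun x hx => abs_le.1 (hmax hx)

theorem one_div_sqrt_le_of_one_sub_le_psi {m s : ℝ} (hm : 0 < m) (h : 1 - m ≤ psi s) :
    1 / √m ≤ 3 * |s| + 2 := by
  have key : 1 ≤ (3 * |s| + 2) ^ 2 * m := by
    rcases le_or_gt (1 / 2) m with hm2 | hm2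
    · nlinarith [abs_nonneg s]
    set r := √(1 + s ^ 2)
    have hr : 0 < r := by positivity
    have hr2 : r ^ 2 = 1 + s ^ 2 := Real.sq_sqrt (by positivity)
    have hsr : (1 - m) * r ≤ s := (le_div_iff₀ hr).1 h
    have hrs : r ≤ 2 * s := by nlinarith
    have hs : |s| = s := abs_of_nonneg (by linarith)
    -- `1 = (r - s) (r + s) ≤ m r (r + s) ≤ 6 m s²`
    have h1 : 1 ≤ m * (r * (r + s)) := by nlinarith
    have h2 : r * (r + s) ≤ 6 * s ^ 2 := by nlinarith
    rw [hs]
    nlinarith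
  have hy : ((3 * |s| + 2) * √m) ^ 2 = (3 * |s| + 2) ^ 2 * m := by
    rw [mul_pow, Real.sq_sqrt hm.le]
  rw [div_le_iff₀ (Real.sqrt_pos.2 hm)]
  exact (one_le_sq_iff₀ (by positivity)).1 (hy ▸ key)

theorem integrableOn_one_div_sqrt_of_one_sub_le_psi {p q : ℝ} {m v : ℝ → ℝ}
    (hm : ContinuousOn m (Ioo p q)) (hm_pos : ∀ x ∈ Ioo p q, 0 < m x)
    (hv : IntegrableOn v (Ioo p q)) (h : ∀ x ∈ Ioo p q, 1 - m x ≤ psi (v x)) :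
    IntegrableOn (fun x => 1 / √(m x)) (Ioo p q) := by
  have hcont : ContinuousOn (fun x => 1 / √(m x)) (Ioo p q) :=
    continuousOn_const.div hm.sqrt fun x hx => (Real.sqrt_pos.2 (hm_pos x hx)).ne'
  have hbound : IntegrableOn (fun x => 3 * |v x| + 2) (Ioo p q) :=
    (hv.abs.const_mul 3).add (integrableOn_const measure_Ioo_lt_top.ne)
  refine hbound.mono' (hcont.aestronglyMeasurable measurableSet_Ioo) ?_
  filter_upwards [self_mem_ae_restrict measurableSet_Ioo] with x hx
  rw [Real.norm_eq_abs, abs_of_nonneg (by positivity)]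
  exact one_div_sqrt_le_of_one_sub_le_psi (hm_pos x hx) (h x hx)

theorem lt_one_of_not_integrableOn_right {c δ : ℝ} {w w' μ v : ℝ → ℝ} (hδ : 0 < δ)
    (hμ : IntegrableOn μ (Ioo c (c + δ))) (hw' : IntervalIntegrable w' volume c (c + δ))
    (hw'μ : ∀ᵐ t, t ∈ Ioo c (c + δ) → -μ t ≤ w' t)
    (hw : ∀ x ∈ Ioo c (c + δ), w x - w c = ∫ t in c..x, w' t)
    (hwv : ∀ x ∈ Ioo c (c + δ), w x = psi (v x)) (hv : IntegrableOn v (Ioo c (c + δ)))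
    (hM : ∀ x ∈ Ioo c (c + δ), 0 < ∫ t in c..x, μ t)
    (hnot : ¬ IntegrableOn (fun x => 1 / √(∫ t in c..x, μ t)) (Ioo c (c + δ))) :
    w c < 1 := by
  have hμ' : IntervalIntegrable μ volume c (c + δ) :=
    (intervalIntegrable_iff_integrableOn_Ioo_of_le (by linarith)).2 hμ
  have hsub : Ioo c (c + δ) ⊆ uIcc c (c + δ) := Ioo_subset_Icc_self.trans Icc_subset_uIcc
  by_contra! hwc
  refine hnot (integrableOn_one_div_sqrt_of_one_sub_le_psi
    ((continuousOn_primitive_interval' hμ' left_mem_uIcc).mono hsub) hM hv fun x hx => ?_)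
  have hx' : uIcc c x ⊆ uIcc c (c + δ) := uIcc_subset_uIcc left_mem_uIcc (hsub hx)
  have hle : ∫ t in c..x, -μ t ≤ ∫ t in c..x, w' t :=
    integral_mono_of_ae_mem_Ioo hx.1.le (hμ'.mono_set hx').neg (hw'.mono_set hx')
      (hw'μ.mono fun t ht htx => ht ⟨htx.1, htx.2.trans hx.2⟩)
  rw [intervalIntegral.integral_neg] at hle
  linarith [hw x hx, hwv x hx]

theorem lt_one_of_not_integrableOn_left {c δ : ℝ} {w w' ν v : ℝ → ℝ} (hδ : 0 < δ)
    (hν : IntegrableOn ν (Ioo (c - δ) c)) (hw' : IntervalIntegrable w' volume (c - δ) c)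
    (hw'ν : ∀ᵐ t, t ∈ Ioo (c - δ) c → w' t ≤ -ν t)
    (hw : ∀ x ∈ Ioo (c - δ) c, w c - w x = ∫ t in x..c, w' t)
    (hwv : ∀ x ∈ Ioo (c - δ) c, w x = psi (v x)) (hv : IntegrableOn v (Ioo (c - δ) c))
    (hN : ∀ x ∈ Ioo (c - δ) c, (∫ t in x..c, ν t) < 0)
    (hnot : ¬ IntegrableOn (fun x => 1 / √(-∫ t in x..c, ν t)) (Ioo (c - δ) c)) :
    w c < 1 := by
  have hν' : IntervalIntegrable ν volume (c - δ) c :=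
    (intervalIntegrable_iff_integrableOn_Ioo_of_le (by linarith)).2 hν
  have hsub : Ioo (c - δ) c ⊆ uIcc (c - δ) c := Ioo_subset_Icc_self.trans Icc_subset_uIcc
  by_contra! hwc
  refine hnot (integrableOn_one_div_sqrt_of_one_sub_le_psi
    (((continuousOn_primitive_interval' hν' right_mem_uIcc).mono hsub).congr
      fun x _ => (integral_symm x c).symm)
    (fun x hx => neg_pos.2 (hN x hx)) hv fun x hx => ?_)
  have hx' : uIcc x c ⊆ uIcc (c - δ) c := uIcc_subset_uIcc (hsub hx) right_mem_uIcc
  have hle : ∫ t in x..c, w' t ≤ ∫ t in x..c, -ν t :=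
    integral_mono_of_ae_mem_Ioo hx.2.le (hw'.mono_set hx') (hν'.mono_set hx').neg
      (hw'ν.mono fun t ht htx => ht ⟨hx.1.trans htx.1, htx.2⟩)
  rw [intervalIntegral.integral_neg] at hle
  linarith [hw x hx, hwv x hx]

theorem neg_one_lt_flux {a b c : ℝ} {f : ℝ → ℝ → ℝ} {u u' w w' : ℝ → ℝ} (hac : a < c)
    (hcb : c < b) (hw' : IntervalIntegrable w' volume a b)
    (hw_sub : ∀ p ∈ Icc a b, ∀ q ∈ Icc a b, w q - w p = ∫ t in p..q, w' t)
    (hw_eq : ∀ x ∈ Ioo a b, x ≠ c → w x = psi (u' x))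
    (hw'f : ∀ᵐ x, x ∈ Ioo a b → w' x = -f x (u x))
    (hsign : ∀ᵐ x, x ∈ Ioo a c → f x (u x) ≤ 0) : -1 < w c := by
  obtain ⟨x, hx⟩ := nonempty_Ioo.2 hac
  have hxb : x ∈ Ioo a b := ⟨hx.1, hx.2.trans hcb⟩
  have hxc : uIcc x c ⊆ uIcc a b := uIcc_subset_uIcc
    (Icc_subset_uIcc (Ioo_subset_Icc_self hxb)) (Icc_subset_uIcc ⟨hac.le, hcb.le⟩)
  have hmono : ∫ _ in x..c, (0 : ℝ) ≤ ∫ t in x..c, w' t := by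
    refine integral_mono_of_ae_mem_Ioo hx.2.le intervalIntegrable_const (hw'.mono_set hxc) ?_
    filter_upwards [hw'f, hsign] with t hft hsignt ht
    have htc : t ∈ Ioo a c := ⟨hx.1.trans ht.1, ht.2⟩
    rw [hft ⟨htc.1, htc.2.trans hcb⟩]
    linarith [hsignt htc]
  rw [intervalIntegral.integral_zero] at hmono
  linarith [hw_sub x (Ioo_subset_Icc_self hxb) c ⟨hac.le, hcb.le⟩, hw_eq x hxb hx.2.ne,
    (abs_lt.1 (abs_psi_lt_one (u' x))).1]

theorem flux_lt_one {a b c : ℝ} {f : ℝ → ℝ → ℝ} {u u' w w' : ℝ → ℝ} (hac : a < c)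
    (hcb : c < b) (hu' : IntegrableOn u' (Ioo a b)) (hw' : IntervalIntegrable w' volume a b)
    (hw_sub : ∀ p ∈ Icc a b, ∀ q ∈ Icc a b, w q - w p = ∫ t in p..q, w' t)
    (hw_eq : ∀ x ∈ Ioo a b, x ≠ c → w x = psi (u' x))
    (hw'f : ∀ᵐ x, x ∈ Ioo a b → w' x = -f x (u x))
    (hdecay :
      (∃ δ > (0:ℝ), a ≤ c - δ ∧ ∃ ν : ℝ → ℝ,
        IntegrableOn ν (Ioo (c - δ) c) ∧
        (∀ᵐ x ∂volume, x ∈ Ioo (c - δ) c → ν x ≤ f x (u x)) ∧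
        (∀ x ∈ Ico (c - δ) c, (∫ t in x..c, ν t) < 0) ∧
        ¬ IntegrableOn (fun x => 1 / Real.sqrt (-(∫ t in x..c, ν t))) (Ioo (c - δ) c)) ∨
      (∃ δ > (0:ℝ), c + δ ≤ b ∧ ∃ μ : ℝ → ℝ,
        IntegrableOn μ (Ioo c (c + δ)) ∧
        (∀ᵐ x ∂volume, x ∈ Ioo c (c + δ) → f x (u x) ≤ μ x) ∧
        (∀ x ∈ Ioc c (c + δ), 0 < ∫ t in c..x, μ t) ∧
        ¬ IntegrableOn (fun x => 1 / Real.sqrt (∫ t in c..x, μ t)) (Ioo c (c + δ)))) :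
    w c < 1 := by
  have hc : c ∈ Icc a b := ⟨hac.le, hcb.le⟩
  rcases hdecay with ⟨δ, hδ, haδ, ν, hν, hνf, hN, hnot⟩ | ⟨δ, hδ, hδb, μ, hμ, hμf, hM, hnot⟩
  · have hsub : Ioo (c - δ) c ⊆ Ioo a b := Ioo_subset_Ioo haδ hcb.le
    have hsub' : uIcc (c - δ) c ⊆ uIcc a b := uIcc_subset_uIcc
      (Icc_subset_uIcc ⟨haδ, by linarith⟩) (Icc_subset_uIcc hc)
    refine lt_one_of_not_integrableOn_left hδ hν (hw'.mono_set hsub') ?_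
      (fun x hx => hw_sub x (Ioo_subset_Icc_self (hsub hx)) c hc)
      (fun x hx => hw_eq x (hsub hx) hx.2.ne) (hu'.mono_set hsub)
      (fun x hx => hN x (Ioo_subset_Ico_self hx)) hnot
    filter_upwards [hw'f, hνf] with t hft hνt ht
    rw [hft (hsub ht)]
    linarith [hνt ht]
  · have hsub : Ioo c (c + δ) ⊆ Ioo a b := Ioo_subset_Ioo hac.le hδb
    have hsub' : uIcc c (c + δ) ⊆ uIcc a b := uIcc_subset_uIcc
      (Icc_subset_uIcc hc) (Icc_subset_uIcc ⟨by linarith, hδb⟩)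
    refine lt_one_of_not_integrableOn_right hδ hμ (hw'.mono_set hsub') ?_
      (fun x hx => hw_sub c hc x (Ioo_subset_Icc_self (hsub hx)))
      (fun x hx => hw_eq x (hsub hx) hx.1.ne') (hu'.mono_set hsub)
      (fun x hx => hM x (Ioo_subset_Ioc_self hx)) hnot
    filter_upwards [hw'f, hμf] with t hft hμt ht
    rw [hft (hsub ht)]
    linarith [hμt ht]

theorem interior_regularity_sign_change_hh_general
    (a b c : ℝ) (hc : c ∈ Ioo a b) (f : ℝ → ℝ → ℝ) (u u' w w' : ℝ → ℝ)
    -- u ∈ W^{1,1}(a,b)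
    (hu'_int : IntegrableOn u' (Ioo a b))
    (hu_ftc : ∀ x ∈ Icc a b, u x = u a + ∫ t in a..x, u' t)
    -- the flux w is absolutely continuous on [a,b] with derivative w' ∈ L¹(a,b)
    (hw'_int : IntegrableOn w' (Ioo a b))
    (hw_ftc : ∀ x ∈ Icc a b, w x = w a + ∫ t in a..x, w' t)
    (hw_eq : ∀ x ∈ Ioo a b, x ≠ c → w x = u' x / Real.sqrt (1 + u' x ^ 2))
    (hw' : ∀ᵐ x ∂volume, x ∈ Ioo a b → w' x = -f x (u x))
    -- sign conditions
    (hsign₁ : ∀ᵐ x ∂volume, x ∈ Ioo a c → f x (u x) ≤ 0)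
    -- integral decay condition on the left or on the right of c
    (hdecay :
      (∃ δ > (0:ℝ), a ≤ c - δ ∧ ∃ ν : ℝ → ℝ,
        IntegrableOn ν (Ioo (c - δ) c) ∧
        (∀ᵐ x ∂volume, x ∈ Ioo (c - δ) c → ν x ≤ f x (u x)) ∧
        (∀ x ∈ Ico (c - δ) c, (∫ t in x..c, ν t) < 0) ∧
        ¬ IntegrableOn (fun x => 1 / Real.sqrt (-(∫ t in x..c, ν t))) (Ioo (c - δ) c)) ∨
      (∃ δ > (0:ℝ), c + δ ≤ b ∧ ∃ μ : ℝ → ℝ,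
        IntegrableOn μ (Ioo c (c + δ)) ∧
        (∀ᵐ x ∂volume, x ∈ Ioo c (c + δ) → f x (u x) ≤ μ x) ∧
        (∀ x ∈ Ioc c (c + δ), 0 < ∫ t in c..x, μ t) ∧
        ¬ IntegrableOn (fun x => 1 / Real.sqrt (∫ t in c..x, μ t)) (Ioo c (c + δ)))) :
    |w c| < 1 ∧
    (∀ x ∈ Ioo a b, HasDerivAt u (w x / Real.sqrt (1 - w x ^ 2)) x) ∧
    ContinuousOn (fun x => w x / Real.sqrt (1 - w x ^ 2)) (Ioo a b) ∧
    (∀ c₁ d₁ : ℝ, a < c₁ → c₁ ≤ d₁ → d₁ < b → ∃ V : ℝ → ℝ,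
      IntegrableOn V (Icc c₁ d₁) ∧ ∀ x ∈ Icc c₁ d₁,
        w x / Real.sqrt (1 - w x ^ 2) = w c₁ / Real.sqrt (1 - w c₁ ^ 2) + ∫ t in c₁..x, V t) ∧
    (∀ᵐ x ∂volume, x ∈ Ioo a b → HasDerivAt w (-f x (u x)) x) := by
  obtain ⟨hac, hcb⟩ := hc
  have hab : a ≤ b := (hac.trans hcb).le
  have hu'_ii := (intervalIntegrable_iff_integrableOn_Ioo_of_le hab).2 hu'_int
  have hw'_ii := (intervalIntegrable_iff_integrableOn_Ioo_of_le hab).2 hw'_int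
  have hw_psi : ∀ x ∈ Ioo a b, x ≠ c → w x = psi (u' x) := hw_eq
  have hw_ac := absolutelyContinuousOnInterval_of_eq_add_integral hab hw'_ii hw_ftc
  have hw_sub : ∀ p ∈ Icc a b, ∀ q ∈ Icc a b, w q - w p = ∫ t in p..q, w' t :=
    fun p hp q hq => sub_eq_integral_of_eq_add_integral hw'_ii hw_ftc hp hq
  have hwc : |w c| < 1 := abs_lt.2 ⟨neg_one_lt_flux hac hcb hw'_ii hw_sub hw_psi hw' hsign₁,
    flux_lt_one hac hcb hu'_int hw'_ii hw_sub hw_psi hw' hdecay⟩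
  have hw_abs : ∀ x ∈ Ioo a b, |w x| < 1 := fun x hx => by
    rcases eq_or_ne x c with rfl | hxc
    exacts [hwc, hw_psi x hx hxc ▸ abs_psi_lt_one (u' x)]
  have hg_cont : ContinuousOn (psiInv ∘ w) (Ioo a b) :=
    contDiffOn_psiInv.continuousOn.comp (hw_ac.continuousOn.mono
      (Ioo_subset_Icc_self.trans Icc_subset_uIcc)) fun x hx => abs_lt.1 (hw_abs x hx)
  have hu'_eq : ∀ᵐ t, t ∈ Ioo a b → u' t = psiInv (w t) := by
    filter_upwards [Measure.ae_ne volume c] with t htc ht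
    rw [hw_psi t ht htc, psiInv_psi]
  refine ⟨hwc, fun x hx => hasDerivAt_of_eq_add_integral hu'_ii hu_ftc hu'_eq
    (hg_cont.continuousAt (Ioo_mem_nhds hx.1 hx.2)) hx, hg_cont, fun c₁ d₁ h₁ h₁₂ h₂ => ?_, ?_⟩
  · have hsub : uIcc c₁ d₁ ⊆ Ioo a b := uIcc_of_le h₁₂ ▸ Icc_subset_Ioo h₁ h₂
    exact ((hw_ac.mono (hsub.trans (Ioo_subset_Icc_self.trans Icc_subset_uIcc))).psiInv_comp
      fun x hx => hw_abs x (hsub hx)).exists_eq_add_integral h₁₂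
  · filter_upwards [ae_hasDerivAt_of_eq_add_integral hw'_ii hw_ftc, hw'] with x hderiv hx' hx
    exact hx' hx ▸ hderiv hx

/-- **Interior regularity across a sign-change point (Theorem 3.3(hh), strong form).**
`u ∈ W^{1,1}(a,b)` is differentiable off `c`, with `u'` locally absolutely continuous on
`(a,c)` and `(c,b)`; the flux `w` is absolutely continuous on `[a,b]` with `w = ψ(u')` off `c`
and `w' = -f(x,u)` a.e.; `f(·,u(·)) ≤ 0` on `(a,c)` and `≥ 0` on `(c,b)`; and an integral decay
condition holds on the left or on the right of `c`. Then `|w(c)| < 1`, `u` is C¹ on the whole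
of `(a,b)` with derivative `ψ⁻¹(w)` locally absolutely continuous, and the prescribed curvature
equation `-(ψ(u'))' = f(x,u)` holds a.e. in `(a,b)`. -/
theorem interior_regularity_sign_change_hh
    (a b c : ℝ) (hc : c ∈ Ioo a b) (f : ℝ → ℝ → ℝ) (u u' w w' : ℝ → ℝ)
    -- u ∈ W^{1,1}(a,b)
    (hu_cont : ContinuousOn u (Icc a b))
    (hu'_int : IntegrableOn u' (Ioo a b))
    (hu_ftc : ∀ x ∈ Icc a b, u x = u a + ∫ t in a..x, u' t)
    -- u is differentiable on (a,b) ∖ {c}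
    (hu_deriv : ∀ x ∈ Ioo a b, x ≠ c → HasDerivAt u (u' x) x)
    -- u' is locally absolutely continuous on (a,c) and on (c,b)
    (hlocAC₁ : ∀ c₁ d₁ : ℝ, a < c₁ → c₁ ≤ d₁ → d₁ < c → ∃ V : ℝ → ℝ,
      IntegrableOn V (Icc c₁ d₁) ∧ ∀ x ∈ Icc c₁ d₁, u' x = u' c₁ + ∫ t in c₁..x, V t)
    (hlocAC₂ : ∀ c₁ d₁ : ℝ, c < c₁ → c₁ ≤ d₁ → d₁ < b → ∃ V : ℝ → ℝ,
      IntegrableOn V (Icc c₁ d₁) ∧ ∀ x ∈ Icc c₁ d₁, u' x = u' c₁ + ∫ t in c₁..x, V t)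
    -- the flux w is absolutely continuous on [a,b] with derivative w' ∈ L¹(a,b)
    (hw'_int : IntegrableOn w' (Ioo a b))
    (hw_ftc : ∀ x ∈ Icc a b, w x = w a + ∫ t in a..x, w' t)
    (hw_eq : ∀ x ∈ Ioo a b, x ≠ c → w x = u' x / Real.sqrt (1 + u' x ^ 2))
    (hw' : ∀ᵐ x ∂volume, x ∈ Ioo a b → w' x = -f x (u x))
    -- sign conditions
    (hsign₁ : ∀ᵐ x ∂volume, x ∈ Ioo a c → f x (u x) ≤ 0)
    (hsign₂ : ∀ᵐ x ∂volume, x ∈ Ioo c b → 0 ≤ f x (u x))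
    -- integral decay condition on the left or on the right of c
    (hdecay :
      (∃ δ > (0:ℝ), a ≤ c - δ ∧ ∃ ν : ℝ → ℝ,
        IntegrableOn ν (Ioo (c - δ) c) ∧
        (∀ᵐ x ∂volume, x ∈ Ioo (c - δ) c → ν x ≤ f x (u x)) ∧
        (∀ x ∈ Ico (c - δ) c, (∫ t in x..c, ν t) < 0) ∧
        ¬ IntegrableOn (fun x => 1 / Real.sqrt (-(∫ t in x..c, ν t))) (Ioo (c - δ) c)) ∨
      (∃ δ > (0:ℝ), c + δ ≤ b ∧ ∃ μ : ℝ → ℝ,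
        IntegrableOn μ (Ioo c (c + δ)) ∧
        (∀ᵐ x ∂volume, x ∈ Ioo c (c + δ) → f x (u x) ≤ μ x) ∧
        (∀ x ∈ Ioc c (c + δ), 0 < ∫ t in c..x, μ t) ∧
        ¬ IntegrableOn (fun x => 1 / Real.sqrt (∫ t in c..x, μ t)) (Ioo c (c + δ)))) :
    |w c| < 1 ∧
    (∀ x ∈ Ioo a b, HasDerivAt u (w x / Real.sqrt (1 - w x ^ 2)) x) ∧
    ContinuousOn (fun x => w x / Real.sqrt (1 - w x ^ 2)) (Ioo a b) ∧
    (∀ c₁ d₁ : ℝ, a < c₁ → c₁ ≤ d₁ → d₁ < b → ∃ V : ℝ → ℝ,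
      IntegrableOn V (Icc c₁ d₁) ∧ ∀ x ∈ Icc c₁ d₁,
        w x / Real.sqrt (1 - w x ^ 2) = w c₁ / Real.sqrt (1 - w c₁ ^ 2) + ∫ t in c₁..x, V t) ∧
    (∀ᵐ x ∂volume, x ∈ Ioo a b → HasDerivAt w (-f x (u x)) x) :=
  interior_regularity_sign_change_hh_general a b c hc f u u' w w' hu'_int hu_ftc hw'_int hw_ftc
    hw_eq hw' hsign₁ hdecay
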